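/- arXiv:1311.0499 — 6 statements merged into one kernel-verified Lean document; each statement's English description precedes it below -/
import Mathlib

section
/- Rieger unwinding: Let (G,R) be a cyclically ordered group. Define on the set uw(G) = Z \times G the order (m,g) \leq (m',g') iff (m,g)=(m',g') or m<m' or (m=m' and (R(e,g,g') or g=e)), and the group law (k,g)\cdot(m,h) = (k+m,gh) if g=e or h=e or R(e,g,gh), (k+m+1,gh) if R(e,gh,g), and (k+m+1,e) if gh=e \neq g. Then (uw(G),\cdot,\leq) is a totally ordered group. -/
/-!
Cutting the cyclic order at `1` gives a linear order `≤` on `G` with least element `1`, in which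
`R x y z` says that `x, y, z` appear in increasing order up to rotation. In these terms the order
of `uw(G)` is the lexicographic order of `ℤ ×ₗ G`, and `(k, g) · (m, h) = (k + m + c, g h)` with
carry `c = 1` iff `g h < g`. Associativity is the cocycle identity for the carry, which after a
left translation by `g` becomes a statement about three points of a linear order. Translation
invariance holds because left and right multiplications preserve `R`, and a map preserving `R`,
unwound by its carry, is monotone on `ℤ ×ₗ G`. For right multiplications the carry is needed in
the symmetric form `g h < h`; this comes from inversion reversing the cyclic order.
-/

/-- A cyclically ordered group: a ternary relation satisfying R1-R5. -/
def IsCyclicOrder {G : Type*} [Group G] (R : G → G → G → Prop) : Prop :=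
  (∀ x y z : G, R x y z → x ≠ y ∧ y ≠ z ∧ z ≠ x) ∧
  (∀ x y z : G, x ≠ y → y ≠ z → z ≠ x → R x y z ∨ R x z y) ∧
  (∀ x y z : G, R x y z → R y z x) ∧
  (∀ x y z u : G, R x y z → R y u z → R x u z) ∧
  (∀ x y z u v : G, R x y z → R (u * x * v) (u * y * v) (u * z * v))

open scoped Classical in
/-- The group law of the Rieger unwinding on `ℤ × G`:
`(k,g)·(m,h) = (k+m, g*h)` if `g = 1` or `h = 1` or `R 1 g (g*h)`,
`(k+m+1, g*h)` if `R 1 (g*h) g`, and `(k+m+1, 1)` if `g*h = 1 ≠ g`. -/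
noncomputable def uwMul {G : Type*} [Group G] (R : G → G → G → Prop)
    (p q : ℤ × G) : ℤ × G :=
  if p.2 = 1 ∨ q.2 = 1 ∨ R 1 p.2 (p.2 * q.2) then (p.1 + q.1, p.2 * q.2)
  else if R 1 (p.2 * q.2) p.2 then (p.1 + q.1 + 1, p.2 * q.2)
  else (p.1 + q.1 + 1, 1)

/-- The order of the Rieger unwinding on `ℤ × G`:
`(m,g) ≤ (m',g')` iff they are equal, or `m < m'`, or `m = m'` and (`R 1 g g'` or `g = 1`). -/
def uwLe {G : Type*} [Group G] (R : G → G → G → Prop) (p q : ℤ × G) : Prop :=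
  p = q ∨ p.1 < q.1 ∨ (p.1 = q.1 ∧ (R 1 p.2 q.2 ∨ p.2 = 1))

/-- `x → y → z` has one descent more than `x → z` exactly when `x` lies in the half-open cyclic
arc `(y, z]`. -/
theorem ite_lt_add_ite_lt {α : Type*} [LinearOrder α] (x y z : α) :
    ((if y < x then 1 else 0) + if z < y then 1 else 0 : ℤ) =
      (if ((x < z ∧ z < y) ∨ (z < y ∧ y < x) ∨ (y < x ∧ x < z)) ∨ (z = x ∧ y ≠ x) then 1 else 0) +
        if z < x then 1 else 0 := by
  grind

/-- The only delicate case is `n = m + 1` with `x` carried and `y` not; then `φ x < b ≤ φ y`. -/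
theorem toLex_add_ite_le_toLex_add_ite {α : Type*} [LinearOrder α] {φ : α → α} {b : α}
    (hφ : ∀ x y, x ≤ y →
      toLex ((if φ x < b then 1 else 0 : ℤ), φ x) ≤ toLex ((if φ y < b then 1 else 0 : ℤ), φ y))
    (a : ℤ) {m n : ℤ} {x y : α} (h : toLex (m, x) ≤ toLex (n, y)) :
    toLex (a + m + if φ x < b then 1 else 0, φ x) ≤
      toLex (a + n + if φ y < b then 1 else 0, φ y) := by
  rw [Prod.Lex.toLex_le_toLex] at h ⊢
  rcases h with hmn | ⟨rfl, hxy⟩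
  · grind
  · have := hφ x y hxy
    rw [Prod.Lex.toLex_le_toLex] at this
    grind

namespace IsCyclicOrder

variable {G : Type*} [Group G] {R : G → G → G → Prop}

section Rel

variable (hR : IsCyclicOrder R)
include hR

theorem ne_of_rel {x y z : G} (h : R x y z) : x ≠ y ∧ y ≠ z ∧ z ≠ x := hR.1 x y z h

theorem rotate {x y z : G} (h : R x y z) : R y z x := hR.2.2.1 x y z h

theorem rotate_iff {x y z : G} : R x y z ↔ R y z x :=
  ⟨hR.rotate, fun h => hR.rotate (hR.rotate h)⟩

theorem asymm {x y z : G} (h : R x y z) : ¬R x z y := fun h' =>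
  (hR.ne_of_rel (hR.2.2.2.1 x y z x h (hR.rotate (hR.rotate h')))).1 rfl

theorem trans {a x y z : G} (hxy : R a x y) (hyz : R a y z) : R a x z :=
  hR.rotate (hR.rotate (hR.2.2.2.1 x y a z (hR.rotate hxy) (hR.rotate hyz)))

theorem rel_of_rel_of_rel {a x y z : G} (hxy : R a x y) (hyz : R a y z) : R x y z :=
  hR.rotate (hR.rotate (hR.trans (hR.rotate hyz) (hR.rotate (hR.rotate hxy))))

theorem mul_left_iff (u : G) {x y z : G} : R (u * x) (u * y) (u * z) ↔ R x y z := by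
  refine ⟨fun h => ?_, fun h => by simpa using hR.2.2.2.2 x y z u 1 h⟩
  simpa using hR.2.2.2.2 _ _ _ u⁻¹ 1 h

theorem mul_right_iff (v : G) {x y z : G} : R (x * v) (y * v) (z * v) ↔ R x y z := by
  refine ⟨fun h => ?_, fun h => by simpa using hR.2.2.2.2 x y z 1 v h⟩
  simpa using hR.2.2.2.2 _ _ _ 1 v⁻¹ h

theorem rel_inv_of_rel_one {x y : G} (h : R 1 x y) : R 1 y⁻¹ x⁻¹ := by
  -- If `1, a, b` and `1, a⁻¹, b⁻¹` were both in cyclic order, then `b⁻¹ < a b⁻¹ < a` in the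
  -- order cut at `1`; applied twice this yields the impossible cycle `x < y < x⁻¹ < y⁻¹ < x`.
  have key : ∀ {a b : G}, R 1 a b → R 1 a⁻¹ b⁻¹ → R 1 b⁻¹ a := by
    intro a b hab hab'
    have h₁ : R 1 b⁻¹ (a * b⁻¹) := by
      simpa using hR.rotate (hR.rotate ((hR.mul_right_iff b⁻¹).2 hab))
    have h₂ : R 1 (a * b⁻¹) a := by simpa using hR.rotate ((hR.mul_left_iff a).2 hab')
    exact hR.trans h₁ h₂
  obtain ⟨hx, hxy, hy⟩ := hR.ne_of_rel h
  refine (hR.2.1 1 y⁻¹ x⁻¹ ?_ ?_ ?_).resolve_right fun h' => ?_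
  · simpa [eq_comm] using hy
  · simpa [eq_comm] using hxy
  · simpa [eq_comm] using hx
  have hyx : R 1 y x⁻¹ := by simpa using key h' (by simpa using h)
  have hxx : R 1 x x := hR.trans (hR.trans (hR.trans h hyx) h') (key h h')
  exact (hR.ne_of_rel hxx).2.1 rfl

theorem rel_one_inv_comm {a b : G} : R 1 a⁻¹ b ↔ R 1 b⁻¹ a :=
  ⟨fun h => by simpa using hR.rel_inv_of_rel_one h, fun h => by simpa using hR.rel_inv_of_rel_one h⟩

theorem rel_mul_left_iff_rel_mul_right {g h : G} : R 1 (g * h) g ↔ R 1 (g * h) h :=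
  calc R 1 (g * h) g ↔ R g⁻¹ h 1 := by rw [← hR.mul_left_iff g⁻¹]; simp
    _ ↔ R 1 g⁻¹ h := hR.rotate_iff.symm
    _ ↔ R 1 h⁻¹ g := hR.rel_one_inv_comm
    _ ↔ R h⁻¹ g 1 := hR.rotate_iff
    _ ↔ R 1 (g * h) h := by rw [← hR.mul_right_iff h]; simp

noncomputable abbrev cutOrder : LinearOrder G where
  le x y := x = 1 ∨ R 1 x y ∨ x = y
  le_refl _ := Or.inr (Or.inr rfl)
  le_trans x y z := by
    rintro (hx | hxy | rfl) (hy | hyz | rfl)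
    all_goals first | exact Or.inl hx | skip
    · exact absurd hy (hR.ne_of_rel hxy).2.2
    · exact Or.inr (Or.inl (hR.trans hxy hyz))
    · exact Or.inr (Or.inl hxy)
    · exact Or.inl hy
    · exact Or.inr (Or.inl hyz)
    · exact Or.inr (Or.inr rfl)
  le_antisymm x y := by
    rintro (hx | hxy | rfl) (hy | hyx | hyx)
    all_goals first | rfl | exact hyx.symm | skip
    · exact hx.trans hy.symm
    · exact absurd hx (hR.ne_of_rel hyx).2.2
    · exact absurd hy (hR.ne_of_rel hxy).2.2
    · exact absurd hyx (hR.asymm hxy)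
  le_total x y := by
    by_cases hx : x = 1; · exact Or.inl (Or.inl hx)
    by_cases hy : y = 1; · exact Or.inr (Or.inl hy)
    by_cases hxy : x = y; · exact Or.inl (Or.inr (Or.inr hxy))
    rcases hR.2.1 1 x y (Ne.symm hx) hxy hy with h | h
    · exact Or.inl (Or.inr (Or.inl h))
    · exact Or.inr (Or.inr (Or.inl h))
  toDecidableLE := Classical.decRel _

end Rel

section Cut

-- `hle` says that `≤` is `cutOrder`; taking it as a hypothesis keeps local instances out of the
-- statements.
variable [LinearOrder G] (hle : ∀ x y : G, x ≤ y ↔ x = 1 ∨ R 1 x y ∨ x = y)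
include hle

theorem one_le_of_cut (x : G) : 1 ≤ x := (hle 1 x).2 (Or.inl rfl)

variable (hR : IsCyclicOrder R)
include hR

theorem lt_iff_rel_or {x y : G} : x < y ↔ R 1 x y ∨ (x = 1 ∧ y ≠ 1) := by
  have := fun h : R 1 x y => hR.ne_of_rel h
  rw [lt_iff_le_and_ne, hle]
  grind

theorem rel_one_iff {x y : G} : R 1 x y ↔ 1 < x ∧ x < y := by
  refine ⟨fun h => ⟨?_, (hR.lt_iff_rel_or hle).2 (Or.inl h)⟩, fun ⟨hx, hxy⟩ => ?_⟩
  · exact lt_of_le_of_ne (one_le_of_cut hle x) (hR.ne_of_rel h).1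
  · exact ((hR.lt_iff_rel_or hle).1 hxy).resolve_right fun h => hx.ne' h.1

theorem rel_of_lt_of_lt {x y z : G} (hxy : x < y) (hyz : y < z) : R x y z := by
  rcases (one_le_of_cut hle x).eq_or_lt with rfl | hx
  · exact (hR.rel_one_iff hle).2 ⟨hxy, hyz⟩
  · exact hR.rel_of_rel_of_rel ((hR.rel_one_iff hle).2 ⟨hx, hxy⟩)
      ((hR.rel_one_iff hle).2 ⟨hx.trans hxy, hyz⟩)

theorem rel_iff {x y z : G} : R x y z ↔ (x < y ∧ y < z) ∨ (y < z ∧ z < x) ∨ (z < x ∧ x < y) := by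
  have hcyc : ∀ {x y z : G}, (x < y ∧ y < z) ∨ (y < z ∧ z < x) ∨ (z < x ∧ x < y) → R x y z := by
    rintro x y z (⟨hxy, hyz⟩ | ⟨hyz, hzx⟩ | ⟨hzx, hxy⟩)
    · exact hR.rel_of_lt_of_lt hle hxy hyz
    · exact hR.rotate_iff.2 (hR.rel_of_lt_of_lt hle hyz hzx)
    · exact hR.rotate (hR.rel_of_lt_of_lt hle hzx hxy)
  refine ⟨fun h => ?_, hcyc⟩
  obtain ⟨hxy, hyz, hzx⟩ := hR.ne_of_rel h
  by_contra hn
  exact hR.asymm h (hcyc (by grind))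

theorem lt_iff_rel_mul_left (g : G) {a b : G} :
    a < b ↔ R g (g * a) (g * b) ∨ (g * a = g ∧ g * b ≠ g) := by
  rw [hR.lt_iff_rel_or hle, ← hR.mul_left_iff g, mul_one]
  simp only [mul_eq_left, ne_eq]

theorem mul_lt_left_iff_mul_lt_right {g h : G} : g * h < g ↔ g * h < h := by
  rw [hR.lt_iff_rel_or hle, hR.lt_iff_rel_or hle, hR.rel_mul_left_iff_rel_mul_right]
  refine or_congr_right (and_congr_right fun hgh => ?_)
  rw [mul_eq_one_iff_eq_inv.1 hgh, inv_ne_one]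

theorem carry_cocycle (g h k : G) :
    ((if g * h < g then 1 else 0) + if g * h * k < g * h then 1 else 0 : ℤ) =
      (if h * k < h then 1 else 0) + if g * (h * k) < g then 1 else 0 := by
  convert ite_lt_add_ite_lt g (g * h) (g * h * k) using 3
  · rw [hR.lt_iff_rel_mul_left hle g, hR.rel_iff hle, ← mul_assoc]
  · rw [mul_assoc]

theorem toLex_le_toLex_of_preserves {φ : G → G} (hφ : ∀ x y z, R x y z → R (φ x) (φ y) (φ z))
    {x y : G} (hxy : x ≤ y) :
    toLex ((if φ x < φ 1 then 1 else 0 : ℤ), φ x) ≤ toLex ((if φ y < φ 1 then 1 else 0 : ℤ), φ y) := by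
  rw [Prod.Lex.toLex_le_toLex]
  rcases hxy.eq_or_lt with rfl | hlt
  · exact Or.inr ⟨rfl, le_rfl⟩
  rcases (one_le_of_cut hle x).eq_or_lt with rfl | hx
  · grind
  · have := (hR.rel_iff hle).1 (hφ _ _ _ ((hR.rel_one_iff hle).2 ⟨hx, hlt⟩))
    grind

end Cut

end IsCyclicOrder

section Unwinding

variable {G : Type*} [Group G] {R : G → G → G → Prop} [LinearOrder G]
  (hle : ∀ x y : G, x ≤ y ↔ x = 1 ∨ R 1 x y ∨ x = y)
include hle

theorem uwLe_iff_toLex_le {p q : ℤ × G} : uwLe R p q ↔ toLex p ≤ toLex q := by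
  rw [uwLe, Prod.Lex.toLex_le_toLex, hle, Prod.ext_iff]
  grind

variable (hR : IsCyclicOrder R)
include hR

theorem uwMul_eq (p q : ℤ × G) :
    uwMul R p q = (p.1 + q.1 + if p.2 * q.2 < p.2 then 1 else 0, p.2 * q.2) := by
  have hle_mul : p.2 ≤ p.2 * q.2 ↔ p.2 = 1 ∨ q.2 = 1 ∨ R 1 p.2 (p.2 * q.2) := by
    rw [hle, eq_comm (a := p.2) (b := p.2 * q.2), mul_eq_left]
    tauto
  simp only [uwMul, ← hle_mul]
  by_cases hc : p.2 ≤ p.2 * q.2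
  · rw [if_pos hc, if_neg (not_lt.2 hc), add_zero]
  · have hlt := not_le.1 hc
    rw [if_neg hc, if_pos hlt]
    by_cases hR₁ : R 1 (p.2 * q.2) p.2
    · rw [if_pos hR₁]
    · rw [if_neg hR₁, (((hR.lt_iff_rel_or hle).1 hlt).resolve_left hR₁).1]

theorem uwMul_assoc (p q r : ℤ × G) : uwMul R (uwMul R p q) r = uwMul R p (uwMul R q r) := by
  simp only [uwMul_eq hle hR]
  ext
  · linarith [hR.carry_cocycle hle p.2 q.2 r.2]
  · exact mul_assoc _ _ _

theorem one_uwMul (p : ℤ × G) : uwMul R (0, 1) p = p := by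
  simp [uwMul_eq hle hR, not_lt.2 (IsCyclicOrder.one_le_of_cut hle p.2)]

theorem uwMul_one (p : ℤ × G) : uwMul R p (0, 1) = p := by
  simp [uwMul_eq hle hR]

theorem exists_uwMul_eq_one (p : ℤ × G) :
    ∃ q, uwMul R p q = (0, 1) ∧ uwMul R q p = (0, 1) := by
  refine ⟨(-p.1 - if 1 < p.2 then 1 else 0, p.2⁻¹), ?_, ?_⟩
  all_goals simp only [uwMul_eq hle hR, mul_inv_cancel, inv_mul_cancel, Prod.mk.injEq, and_true]
  · ring
  · simp only [(IsCyclicOrder.one_le_of_cut hle _).lt_iff_ne', ne_eq, inv_eq_one]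
    ring

theorem toLex_uwMul_le_uwMul_left (r : ℤ × G) {p q : ℤ × G} (h : toLex p ≤ toLex q) :
    toLex (uwMul R r p) ≤ toLex (uwMul R r q) := by
  rw [uwMul_eq hle hR, uwMul_eq hle hR]
  refine toLex_add_ite_le_toLex_add_ite (φ := (r.2 * ·)) (fun x y hxy => ?_) r.1 h
  simpa using hR.toLex_le_toLex_of_preserves hle (fun x y z => (hR.mul_left_iff r.2).2) hxy

theorem toLex_uwMul_le_uwMul_right (s : ℤ × G) {p q : ℤ × G} (h : toLex p ≤ toLex q) :
    toLex (uwMul R p s) ≤ toLex (uwMul R q s) := by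
  simp only [uwMul_eq hle hR, hR.mul_lt_left_iff_mul_lt_right hle, add_comm _ s.1]
  refine toLex_add_ite_le_toLex_add_ite (φ := (· * s.2)) (fun x y hxy => ?_) s.1 h
  simpa using hR.toLex_le_toLex_of_preserves hle (fun x y z => (hR.mul_right_iff s.2).2) hxy

end Unwinding

/-- The Rieger unwound `(uw(G), ·, ≤)` of a cyclically ordered group is a
totally ordered group. -/
theorem uw_is_totally_ordered_group {G : Type*} [Group G]
    (R : G → G → G → Prop) (hR : IsCyclicOrder R) :
    (∀ p q r : ℤ × G, uwMul R (uwMul R p q) r = uwMul R p (uwMul R q r)) ∧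
    (∀ p : ℤ × G, uwMul R ((0 : ℤ), (1 : G)) p = p ∧ uwMul R p ((0 : ℤ), (1 : G)) = p) ∧
    (∀ p : ℤ × G, ∃ q : ℤ × G,
      uwMul R p q = ((0 : ℤ), (1 : G)) ∧ uwMul R q p = ((0 : ℤ), (1 : G))) ∧
    (∀ p : ℤ × G, uwLe R p p) ∧
    (∀ p q : ℤ × G, uwLe R p q → uwLe R q p → p = q) ∧
    (∀ p q r : ℤ × G, uwLe R p q → uwLe R q r → uwLe R p r) ∧
    (∀ p q : ℤ × G, uwLe R p q ∨ uwLe R q p) ∧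
    (∀ p q r s : ℤ × G, uwLe R p q → uwLe R (uwMul R r (uwMul R p s)) (uwMul R r (uwMul R q s))) := by
  let := hR.cutOrder
  have hle : ∀ x y : G, x ≤ y ↔ x = 1 ∨ R 1 x y ∨ x = y := fun _ _ => Iff.rfl
  simp only [uwLe_iff_toLex_le hle]
  refine ⟨uwMul_assoc hle hR, fun p => ⟨one_uwMul hle hR p, uwMul_one hle hR p⟩,
    exists_uwMul_eq_one hle hR, fun _ => le_rfl, fun _ _ h₁ h₂ => toLex_inj.1 (le_antisymm h₁ h₂),
    fun _ _ _ => le_trans, fun _ _ => le_total _ _, fun _ _ r s h => ?_⟩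
  exact toLex_uwMul_le_uwMul_left hle hR r (toLex_uwMul_le_uwMul_right hle hR s h)
end

section
/- The element z_G = (1,e) is central and cofinal in the Rieger unwound uw(G) of a cyclically ordered group G, and the quotient group uw(G)/\langle z_G \rangle with the winding cyclic order is isomorphic to (G,R). -/
/-- Strict order of the Rieger unwinding. -/
def uwLt {G : Type*} [Group G] (R : G → G → G → Prop) (p q : ℤ × G) : Prop :=
  uwLe R p q ∧ p ≠ q

/-- The winding cyclic order on `uw(G)/⟨z_G⟩`, where `z_G = (1,1)`: cosets of
`⟨z_G⟩` are given by equality of second components, and the relation holds iff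
representatives in `[1, z_G)` satisfy a cyclic permutation of `a' < b' < c'`. -/
def uwWind {G : Type*} [Group G] (R : G → G → G → Prop) (a b c : ℤ × G) : Prop :=
  ∃ a' b' c' : ℤ × G, a'.2 = a.2 ∧ b'.2 = b.2 ∧ c'.2 = c.2 ∧
    uwLe R ((0 : ℤ), (1 : G)) a' ∧ uwLt R a' ((1 : ℤ), (1 : G)) ∧
    uwLe R ((0 : ℤ), (1 : G)) b' ∧ uwLt R b' ((1 : ℤ), (1 : G)) ∧
    uwLe R ((0 : ℤ), (1 : G)) c' ∧ uwLt R c' ((1 : ℤ), (1 : G)) ∧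
    ((uwLt R a' b' ∧ uwLt R b' c') ∨ (uwLt R b' c' ∧ uwLt R c' a') ∨
      (uwLt R c' a' ∧ uwLt R a' b'))

section Aux
variable {G : Type*} [Group G] {R : G → G → G → Prop}

lemma uw_asym (hR : IsCyclicOrder R) {x y z : G} (h : R x y z) : ¬ R x z y := by
  intro h'
  have h2 : R y x z := hR.2.2.1 _ _ _ (hR.2.2.1 _ _ _ h')
  exact (hR.1 _ _ _ (hR.2.2.2.1 x y z x h h2)).1 rfl

lemma uw_trans1 (hR : IsCyclicOrder R) {g h k : G} (h1 : R 1 g h) (h2 : R 1 h k) :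
    R g h k := by
  have h3 : R k 1 h := hR.2.2.1 _ _ _ (hR.2.2.1 _ _ _ h2)
  exact hR.2.2.1 _ _ _ (hR.2.2.2.1 k 1 h g h3 h1)

/-- `Lt0 g h` : `g` precedes `h` in the linear order on `[1,z)` induced by `R` at basepoint 1. -/
def Lt0 (R : G → G → G → Prop) (g h : G) : Prop := (R 1 g h ∨ g = 1) ∧ g ≠ h

lemma uwLt_zero_iff (g h : G) : uwLt R ((0 : ℤ), g) ((0 : ℤ), h) ↔ Lt0 R g h := by
  constructor
  · rintro ⟨hle, hne⟩
    have hgh : g ≠ h := fun e => hne (by simp [e])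
    rcases hle with he | hlt | ⟨-, hr⟩
    · exact absurd he hne
    · exact absurd hlt (by simp)
    · exact ⟨hr, hgh⟩
  · rintro ⟨hr, hne⟩
    exact ⟨Or.inr (Or.inr ⟨rfl, hr⟩), fun e => hne (by simpa using e)⟩

lemma uw_core (hR : IsCyclicOrder R) (g h k : G) :
    R g h k ↔ (Lt0 R g h ∧ Lt0 R h k) ∨ (Lt0 R h k ∧ Lt0 R k g) ∨
      (Lt0 R k g ∧ Lt0 R g h) := by
  have cyc := hR.2.2.1
  have tot := hR.2.1
  constructor
  · intro hgk
    obtain ⟨hgh, hhk, hkg⟩ := hR.1 _ _ _ hgk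
    by_cases hg1 : g = 1
    · subst hg1; exact Or.inl ⟨⟨Or.inr rfl, hgh⟩, ⟨Or.inl hgk, hhk⟩⟩
    by_cases hh1 : h = 1
    · subst hh1
      exact Or.inr (Or.inl ⟨⟨Or.inr rfl, hhk⟩, ⟨Or.inl (cyc _ _ _ hgk), hkg⟩⟩)
    by_cases hk1 : k = 1
    · subst hk1
      exact Or.inr (Or.inr ⟨⟨Or.inr rfl, hkg⟩, ⟨Or.inl (cyc _ _ _ (cyc _ _ _ hgk)), hgh⟩⟩)
    rcases tot 1 g h (Ne.symm hg1) hgh hh1 with h1g | h1h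
    · -- R 1 g h
      rcases tot 1 h k (Ne.symm hh1) hhk hk1 with h1h' | h1k
      · exact Or.inl ⟨⟨Or.inl h1g, hgh⟩, ⟨Or.inl h1h', hhk⟩⟩
      · -- R 1 k h ; claim R 1 k g
        have hkg' : R 1 k g := by
          rcases tot 1 k g (Ne.symm hk1) hkg hg1 with h' | h''
          · exact h'
          · exact absurd (uw_trans1 hR h'' h1k) (uw_asym hR hgk)
        exact Or.inr (Or.inr ⟨⟨Or.inl hkg', hkg⟩, ⟨Or.inl h1g, hgh⟩⟩)
    · -- R 1 h g
      have h1k : R 1 h k := by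
        rcases tot 1 h k (Ne.symm hh1) hhk hk1 with h' | h''
        · exact h'
        · exact absurd (uw_trans1 hR h'' h1h) (uw_asym hR (cyc _ _ _ (cyc _ _ _ hgk)))
      have hkg' : R 1 k g := by
        rcases tot 1 k g (Ne.symm hk1) hkg hg1 with h' | h''
        · exact h'
        · exact absurd (uw_trans1 hR h1h h'') (uw_asym hR (cyc _ _ _ hgk))
      exact Or.inr (Or.inl ⟨⟨Or.inl h1k, hhk⟩, ⟨Or.inl hkg', hkg⟩⟩)
  · have base : ∀ x y z : G, Lt0 R x y → Lt0 R y z → R x y z := by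
      rintro x y z ⟨hxy, hnxy⟩ ⟨hyz, hnyz⟩
      rcases hxy with h1 | h1
      · rcases hyz with h2 | h2
        · exact uw_trans1 hR h1 h2
        · exact absurd h2 (hR.1 _ _ _ h1).2.2
      · subst h1
        rcases hyz with h2 | h2
        · exact h2
        · exact absurd h2.symm hnxy
    rintro (⟨h1, h2⟩ | ⟨h1, h2⟩ | ⟨h1, h2⟩)
    · exact base _ _ _ h1 h2
    · exact cyc _ _ _ (cyc _ _ _ (base _ _ _ h1 h2))
    · exact cyc _ _ _ (base _ _ _ h1 h2)

lemma uw_rep_fst (hR : IsCyclicOrder R) {a : ℤ × G}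
    (h1 : uwLe R ((0 : ℤ), (1 : G)) a) (h2 : uwLt R a ((1 : ℤ), (1 : G))) :
    a.1 = 0 := by
  have hge : 0 ≤ a.1 := by
    rcases h1 with he | hlt | ⟨he, -⟩
    · simp [← he]
    · exact le_of_lt hlt
    · exact le_of_eq he
  have hlt1 : a.1 < 1 := by
    obtain ⟨hle, hne⟩ := h2
    rcases hle with he | hlt | ⟨he, hr | hr⟩
    · exact absurd he hne
    · exact hlt
    · exact absurd rfl (hR.1 _ _ _ hr).2.2
    · exact absurd (Prod.ext he hr) hne
  omega

end Aux

/-- `z_G = (1,1)` is central and cofinal in `uw(G)` (its powers are the `(n,1)`),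
and the quotient `uw(G)/⟨z_G⟩`, cyclically ordered by the winding construction,
is isomorphic to `(G,R)` via the second projection. -/
theorem uw_zG_central_cofinal_quotient {G : Type*} [Group G]
    (R : G → G → G → Prop) (hR : IsCyclicOrder R) :
    (∀ p : ℤ × G, uwMul R ((1 : ℤ), (1 : G)) p = uwMul R p ((1 : ℤ), (1 : G))) ∧
    (∀ p : ℤ × G, ∃ n : ℤ, uwLe R p (n, (1 : G))) ∧
    (∀ p q : ℤ × G, (uwMul R p q).2 = p.2 * q.2) ∧
    Function.Surjective (Prod.snd : ℤ × G → G) ∧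
    (∀ p : ℤ × G, p.2 = 1 ↔ ∃ n : ℤ, p = (n, (1 : G))) ∧
    (∀ a b c : ℤ × G, R a.2 b.2 c.2 ↔ uwWind R a b c) := by
  refine ⟨?_, ?_, ?_, ?_, ?_, ?_⟩
  · intro p
    simp only [uwMul]
    simp [add_comm]
  · intro p
    exact ⟨p.1 + 1, Or.inr (Or.inl (by omega))⟩
  · intro p q
    simp only [uwMul]
    split_ifs with h1 h2
    · rfl
    · rfl
    · push_neg at h1
      by_contra hne
      have hne' : p.2 * q.2 ≠ 1 := fun e => hne (by simp [e])
      have hpq : p.2 ≠ p.2 * q.2 := fun e => h1.2.1 (by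
        have : (1 : G) = q.2 := mul_left_cancel (a := p.2) (by simpa using e)
        exact this.symm)
      rcases hR.2.1 1 p.2 (p.2 * q.2) (Ne.symm h1.1) hpq hne' with h | h
      · exact h1.2.2 h
      · exact h2 h
  · intro g
    exact ⟨((0 : ℤ), g), rfl⟩
  · intro p
    constructor
    · intro h
      exact ⟨p.1, Prod.ext rfl h⟩
    · rintro ⟨n, rfl⟩
      rfl
  · intro a b c
    rw [uw_core hR]
    constructor
    · rintro (⟨h1, h2⟩ | ⟨h1, h2⟩ | ⟨h1, h2⟩) <;>
      · refine ⟨((0 : ℤ), a.2), ((0 : ℤ), b.2), ((0 : ℤ), c.2), rfl, rfl, rfl,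
          Or.inr (Or.inr ⟨rfl, Or.inr rfl⟩), ⟨Or.inr (Or.inl (by omega)), by simp⟩,
          Or.inr (Or.inr ⟨rfl, Or.inr rfl⟩), ⟨Or.inr (Or.inl (by omega)), by simp⟩,
          Or.inr (Or.inr ⟨rfl, Or.inr rfl⟩), ⟨Or.inr (Or.inl (by omega)), by simp⟩, ?_⟩
        simp only [uwLt_zero_iff]
        tauto
    · rintro ⟨a', b', c', ha, hb, hc, ha1, ha2, hb1, hb2, hc1, hc2, hcyc⟩
      have ea : a' = ((0 : ℤ), a.2) := Prod.ext (uw_rep_fst hR ha1 ha2) ha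
      have eb : b' = ((0 : ℤ), b.2) := Prod.ext (uw_rep_fst hR hb1 hb2) hb
      have ec : c' = ((0 : ℤ), c.2) := Prod.ext (uw_rep_fst hR hc1 hc2) hc
      rw [ea, eb, ec] at hcyc
      simp only [uwLt_zero_iff] at hcyc
      tauto
end

section
/- Generalized winding: let (G,\leq) be a totally ordered group and M a central, cofinal, discrete subgroup with first positive element z such that every g \in G satisfies h \leq g < hz for some h \in M. Then G/M can be cyclically ordered by the winding construction, and if D is the convex hull of \langle z \rangle in G then G/M \cong D/\langle z \rangle. -/
open Set

section CircularOrder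

variable {α : Type*} [CircularOrder α] {a b c : α}

theorem sbtw_or_sbtw_of_ne (hab : a ≠ b) (hbc : b ≠ c) (hca : c ≠ a) :
    sbtw a b c ∨ sbtw a c b := by
  by_contra! h
  have hcba : btw c b a := btw_iff_not_sbtw.mpr h.1
  have habc : btw a b c := btw_cyclic_right (btw_iff_not_sbtw.mpr h.2)
  rcases habc.antisymm hcba with h | h | h
  exacts [hab h, hbc h, hca h]

end CircularOrder

section Center

variable {G : Type*} [Group G] {M : Subgroup G}

theorem Subgroup.normal_of_le_center (hcent : M ≤ Subgroup.center G) : M.Normal :=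
  ⟨fun n hn g => by rw [Subgroup.mem_center_iff.mp (hcent hn) g, mul_inv_cancel_right]; exact hn⟩

theorem QuotientGroup.mk_mul_of_mem_of_le_center (hcent : M ≤ Subgroup.center G) {m : G}
    (hm : m ∈ M) (g : G) : ((m * g : G) : G ⧸ M) = g := by
  rw [← Subgroup.mem_center_iff.mp (hcent hm) g]
  exact QuotientGroup.mk_mul_of_mem g hm

end Center

section Winding

variable {G : Type*} [Group G] [LinearOrder G]

attribute [local instance] LinearOrder.toCircularOrder

/-- Here `sbtw g h k` is that of the circular order induced by `<`, i.e. the disjunction of the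
three rotations of `g < h < k`. -/
def windingRel (M : Subgroup G) (z : G) (a b c : G ⧸ M) : Prop :=
  ∃ g h k : G, (g : G ⧸ M) = a ∧ (h : G ⧸ M) = b ∧ (k : G ⧸ M) = c ∧
    1 ≤ g ∧ g < z ∧ 1 ≤ h ∧ h < z ∧ 1 ≤ k ∧ k < z ∧ sbtw g h k

/-- The order-convex hull `D` of `⟨z⟩`. -/
def zpowersHull (z : G) : Set G :=
  {d | ∃ m n : ℤ, z ^ m ≤ d ∧ d ≤ z ^ n}

variable {M : Subgroup G} {z : G}

theorem windingRel.cyclic {a b c : G ⧸ M} : windingRel M z a b c → windingRel M z b c a :=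
  fun ⟨g, h, k, hg, hh, hk, hg₁, hgz, hh₁, hhz, hk₁, hkz, hs⟩ =>
    ⟨h, k, g, hh, hk, hg, hh₁, hhz, hk₁, hkz, hg₁, hgz, sbtw_cyclic_left hs⟩

theorem windingRel_mk_iff (hinj : InjOn (QuotientGroup.mk : G → G ⧸ M) (Ico 1 z)) {g h k : G}
    (hg : g ∈ Ico 1 z) (hh : h ∈ Ico 1 z) (hk : k ∈ Ico 1 z) :
    windingRel M z g h k ↔ sbtw g h k := by
  constructor
  · rintro ⟨g', h', k', eg, eh, ek, hg₁, hgz, hh₁, hhz, hk₁, hkz, hs⟩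
    rwa [← hinj ⟨hg₁, hgz⟩ hg eg, ← hinj ⟨hh₁, hhz⟩ hh eh, ← hinj ⟨hk₁, hkz⟩ hk ek]
  · exact fun hs => ⟨g, h, k, rfl, rfl, rfl, hg.1, hg.2, hh.1, hh.2, hk.1, hk.2, hs⟩

variable [MulLeftMono G]

theorem le_of_le_of_lt_mul (hzmin : ∀ m ∈ M, 1 < m → z ≤ m) {m m' g : G} (hm : m ∈ M)
    (hm' : m' ∈ M) (h : m' ≤ g) (h' : g < m * z) : m' ≤ m := by
  by_contra! hlt
  have hz : z ≤ m⁻¹ * m' :=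
    hzmin _ (M.mul_mem (M.inv_mem hm) hm') (lt_inv_mul_iff_mul_lt.mpr (by simpa using hlt))
  exact (h.trans_lt h').not_ge (le_inv_mul_iff_mul_le.mp hz)

theorem eq_of_le_of_lt_mul (hzmin : ∀ m ∈ M, 1 < m → z ≤ m) {m m' g : G} (hm : m ∈ M)
    (hm' : m' ∈ M) (h₁ : m ≤ g) (h₂ : g < m * z) (h₁' : m' ≤ g) (h₂' : g < m' * z) : m = m' :=
  le_antisymm (le_of_le_of_lt_mul hzmin hm' hm h₁ h₂') (le_of_le_of_lt_mul hzmin hm hm' h₁' h₂)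

theorem injOn_mk_Ico (hcent : M ≤ Subgroup.center G) (hzmin : ∀ m ∈ M, 1 < m → z ≤ m) :
    InjOn (QuotientGroup.mk : G → G ⧸ M) (Ico 1 z) := by
  intro g hg g' hg' h
  have hmem : g⁻¹ * g' ∈ M := QuotientGroup.eq.mp h
  obtain ⟨m, hm, rfl⟩ : ∃ m ∈ M, g' = m * g :=
    ⟨_, hmem, by rw [← Subgroup.mem_center_iff.mp (hcent hmem) g, mul_inv_cancel_left]⟩
  have hm_one : m = 1 := eq_of_le_of_lt_mul hzmin hm M.one_mem
    (le_mul_of_one_le_right' hg.1) (mul_lt_mul_right hg.2 m) hg'.1 (by simpa using hg'.2)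
  rw [hm_one, one_mul]

theorem surjOn_mk_Ico (hcent : M ≤ Subgroup.center G)
    (hdisc : ∀ g : G, ∃ h ∈ M, h ≤ g ∧ g < h * z) :
    SurjOn (QuotientGroup.mk : G → G ⧸ M) (Ico 1 z) univ := by
  intro a _
  obtain ⟨x, rfl⟩ := QuotientGroup.mk_surjective a
  obtain ⟨m, hm, hm₁, hm₂⟩ := hdisc x
  exact ⟨m⁻¹ * x, ⟨le_inv_mul_iff_mul_le.mpr (by simpa using hm₁), inv_mul_lt_iff_lt_mul.mpr hm₂⟩,
    QuotientGroup.mk_mul_of_mem_of_le_center hcent (M.inv_mem hm) x⟩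

theorem windingRel_mk_of_lt_of_lt_mul_of_mem_Ico (hcent : M ≤ Subgroup.center G) (hzM : z ∈ M)
    {y₁ y₂ y₃ : G}
    (hy₁ : y₁ ∈ Ico 1 z) (h₁₂ : y₁ < y₂) (h₂₃ : y₂ < y₃) (h₃₁ : y₃ < y₁ * z) :
    windingRel M z y₁ y₂ y₃ := by
  -- each `y ∈ [1, z * z)` is represented in `[1, z)` by `y` if `y < z` and by `z⁻¹ * y` otherwise
  have hshift : ∀ y : G, ((z⁻¹ * y : G) : G ⧸ M) = y :=
    QuotientGroup.mk_mul_of_mem_of_le_center hcent (M.inv_mem hzM)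
  have h₃₁' : z⁻¹ * y₃ < y₁ :=
    inv_mul_lt_iff_lt_mul.mpr (h₃₁.trans_eq (Subgroup.mem_center_iff.mp (hcent hzM) y₁))
  obtain ⟨hy₁₁, hy₁z⟩ := hy₁
  rcases lt_or_ge y₃ z with hy₃ | hy₃
  · exact ⟨y₁, y₂, y₃, rfl, rfl, rfl, hy₁₁, hy₁z, hy₁₁.trans h₁₂.le, h₂₃.trans hy₃,
      hy₁₁.trans (h₁₂.trans h₂₃).le, hy₃, Or.inl ⟨h₁₂, h₂₃⟩⟩
  have hy₃₁ : 1 ≤ z⁻¹ * y₃ := le_inv_mul_iff_mul_le.mpr (by simpa using hy₃)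
  rcases lt_or_ge y₂ z with hy₂ | hy₂
  · exact ⟨y₁, y₂, z⁻¹ * y₃, rfl, rfl, hshift y₃, hy₁₁, hy₁z, hy₁₁.trans h₁₂.le, hy₂,
      hy₃₁, h₃₁'.trans hy₁z, Or.inr (Or.inr ⟨h₃₁', h₁₂⟩)⟩
  · have h₂₃' : z⁻¹ * y₂ < z⁻¹ * y₃ := mul_lt_mul_right h₂₃ _
    exact ⟨y₁, z⁻¹ * y₂, z⁻¹ * y₃, rfl, hshift y₂, hshift y₃, hy₁₁, hy₁z,
      le_inv_mul_iff_mul_le.mpr (by simpa using hy₂), h₂₃'.trans (h₃₁'.trans hy₁z),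
      hy₃₁, h₃₁'.trans hy₁z, Or.inr (Or.inl ⟨h₂₃', h₃₁'⟩)⟩

theorem windingRel_mk_of_lt_of_lt_mul (hcent : M ≤ Subgroup.center G) (hzM : z ∈ M)
    (hdisc : ∀ g : G, ∃ h ∈ M, h ≤ g ∧ g < h * z) {x₁ x₂ x₃ : G}
    (h₁₂ : x₁ < x₂) (h₂₃ : x₂ < x₃) (h₃₁ : x₃ < x₁ * z) :
    windingRel M z x₁ x₂ x₃ := by
  -- dividing by the `M`-floor `m` of `x₁` moves `x₁` into `[1, z)` and fixes all cosets
  obtain ⟨m, hm, hm₁, hm₂⟩ := hdisc x₁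
  have key := windingRel_mk_of_lt_of_lt_mul_of_mem_Ico (M := M) hcent hzM
    ⟨le_inv_mul_iff_mul_le.mpr (by simpa using hm₁), inv_mul_lt_iff_lt_mul.mpr hm₂⟩
    (mul_lt_mul_right h₁₂ m⁻¹) (mul_lt_mul_right h₂₃ m⁻¹)
    (by rw [mul_assoc]; exact mul_lt_mul_right h₃₁ m⁻¹)
  simpa only [QuotientGroup.mk_mul_of_mem_of_le_center hcent (M.inv_mem hm)] using key

theorem exists_zpow_le_lt_zpow_add_one (hz : 1 < z) {d : G} (hd : d ∈ zpowersHull z) :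
    ∃ k : ℤ, z ^ k ≤ d ∧ d < z ^ (k + 1) := by
  obtain ⟨m, n, hm, hn⟩ := hd
  have hmono : StrictMono (fun k : ℤ => z ^ k) :=
    strictMono_int_of_lt_succ fun k => by rw [zpow_add_one]; exact lt_mul_of_one_lt_right' _ hz
  obtain ⟨k, hk, hmax⟩ :=
    Int.exists_greatest_of_bdd (P := fun k => z ^ k ≤ d)
      ⟨n, fun k hk => hmono.le_iff_le.mp (hk.trans hn)⟩ ⟨m, hm⟩
  exact ⟨k, hk, lt_of_not_ge fun h => (hmax _ h).not_gt (lt_add_one k)⟩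

theorem mem_iff_exists_zpow_of_mem_zpowersHull (hzM : z ∈ M) (hz : 1 < z)
    (hzmin : ∀ m ∈ M, 1 < m → z ≤ m) {d : G} (hd : d ∈ zpowersHull z) :
    d ∈ M ↔ ∃ k : ℤ, d = z ^ k := by
  refine ⟨fun hdM => ?_, fun ⟨k, hk⟩ => hk ▸ M.zpow_mem hzM k⟩
  obtain ⟨k, hk, hk'⟩ := exists_zpow_le_lt_zpow_add_one hz hd
  exact ⟨k, eq_of_le_of_lt_mul hzmin hdM (M.zpow_mem hzM k) le_rfl (lt_mul_of_one_lt_right' d hz)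
    hk (by rwa [← zpow_add_one])⟩

variable [MulRightMono G]

theorem windingRel.mul_mul (hcent : M ≤ Subgroup.center G) (hzM : z ∈ M)
    (hdisc : ∀ g : G, ∃ h ∈ M, h ≤ g ∧ g < h * z) [M.Normal] {a b c : G ⧸ M} (u v : G ⧸ M) :
    windingRel M z a b c → windingRel M z (u * a * v) (u * b * v) (u * c * v) := by
  rintro ⟨g, h, k, rfl, rfl, rfl, hg₁, hgz, hh₁, hhz, hk₁, hkz, hs⟩
  obtain ⟨x, rfl⟩ := QuotientGroup.mk_surjective u
  obtain ⟨y, rfl⟩ := QuotientGroup.mk_surjective v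
  have translate : ∀ {g₁ g₂ g₃ : G}, 1 ≤ g₁ → g₁ < g₂ → g₂ < g₃ → g₃ < z →
      windingRel M z ↑(x * g₁ * y) ↑(x * g₂ * y) ↑(x * g₃ * y) := by
    intro g₁ g₂ g₃ h₁ h₁₂ h₂₃ h₃
    refine windingRel_mk_of_lt_of_lt_mul hcent hzM hdisc
      (mul_lt_mul_left (mul_lt_mul_right h₁₂ x) y) (mul_lt_mul_left (mul_lt_mul_right h₂₃ x) y) ?_
    calc x * g₃ * y < x * z * y := mul_lt_mul_left (mul_lt_mul_right h₃ x) y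
      _ = x * y * z := by rw [mul_assoc, ← Subgroup.mem_center_iff.mp (hcent hzM) y, mul_assoc]
      _ ≤ x * g₁ * y * z := mul_le_mul_left (mul_le_mul_left (le_mul_of_one_le_right' h₁) y) z
  rcases hs with ⟨h₁, h₂⟩ | ⟨h₁, h₂⟩ | ⟨h₁, h₂⟩
  · exact translate hg₁ h₁ h₂ hkz
  · exact (translate hh₁ h₁ h₂ hgz).cyclic.cyclic
  · exact (translate hk₁ h₁ h₂ hhz).cyclic

theorem isCyclicOrder_windingRel [M.Normal] (hcent : M ≤ Subgroup.center G) (hzM : z ∈ M)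
    (hzmin : ∀ m ∈ M, 1 < m → z ≤ m) (hdisc : ∀ g : G, ∃ h ∈ M, h ≤ g ∧ g < h * z) :
    IsCyclicOrder (windingRel M z) := by
  have hinj := injOn_mk_Ico hcent hzmin
  have hsurj := surjOn_mk_Ico hcent hdisc
  refine ⟨fun a b c => ?_, fun a b c => ?_, fun _ _ _ => windingRel.cyclic, fun a b c d => ?_,
    fun _ _ _ u v => windingRel.mul_mul hcent hzM hdisc u v⟩
  all_goals
    obtain ⟨g, hg, rfl⟩ := hsurj (mem_univ a)
    obtain ⟨h, hh, rfl⟩ := hsurj (mem_univ b)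
    obtain ⟨k, hk, rfl⟩ := hsurj (mem_univ c)
  · rw [windingRel_mk_iff hinj hg hh hk]
    intro hs
    refine ⟨fun e => ?_, fun e => ?_, fun e => ?_⟩
    · exact sbtw_irrefl_left (hinj hg hh e ▸ hs)
    · exact sbtw_irrefl_right (hinj hh hk e ▸ hs)
    · exact sbtw_irrefl_left_right (hinj hk hg e ▸ hs)
  · rw [windingRel_mk_iff hinj hg hh hk, windingRel_mk_iff hinj hg hk hh]
    intro hgh hhk hkg
    exact sbtw_or_sbtw_of_ne (ne_of_apply_ne _ hgh) (ne_of_apply_ne _ hhk) (ne_of_apply_ne _ hkg)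
  · obtain ⟨l, hl, rfl⟩ := hsurj (mem_univ d)
    rw [windingRel_mk_iff hinj hg hh hk, windingRel_mk_iff hinj hh hl hk,
      windingRel_mk_iff hinj hg hl hk]
    exact SBtw.sbtw.trans_left

end Winding

/-- Generalized winding: if `M` is a central, cofinal, discrete subgroup of a
totally ordered group `G`, with first positive element `z`, such that every
element of `G` lies between some `h ∈ M` and `h * z`, then the winding relation
cyclically orders `G/M`; moreover, `D` being the convex hull of `⟨z⟩`, the
natural map `D → G/M` is surjective with kernel `⟨z⟩`, i.e. `G/M = D/⟨z⟩`. -/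
theorem generalized_winding {G : Type*} [Group G] [LinearOrder G]
    [CovariantClass G G (· * ·) (· < ·)]
    [CovariantClass G G (Function.swap (· * ·)) (· < ·)]
    (M : Subgroup G) (hcent : M ≤ Subgroup.center G)
    (z : G) (hzM : z ∈ M) (hz1 : 1 < z) (hzmin : ∀ m ∈ M, 1 < m → z ≤ m)
    (hdisc : ∀ g : G, ∃ h ∈ M, h ≤ g ∧ g < h * z) :
    letI : M.Normal := ⟨fun n hn g => by
      rw [Subgroup.mem_center_iff.mp (hcent hn) g, mul_inv_cancel_right]
      exact hn⟩
    IsCyclicOrder (fun a b c : G ⧸ M =>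
      ∃ g h k : G, (g : G ⧸ M) = a ∧ (h : G ⧸ M) = b ∧ (k : G ⧸ M) = c ∧
        1 ≤ g ∧ g < z ∧ 1 ≤ h ∧ h < z ∧ 1 ≤ k ∧ k < z ∧
        ((g < h ∧ h < k) ∨ (h < k ∧ k < g) ∨ (k < g ∧ g < h))) ∧
    (∀ a : G ⧸ M, ∃ d : G,
      (∃ m n : ℤ, z ^ m ≤ d ∧ d ≤ z ^ n) ∧ (d : G ⧸ M) = a) ∧
    (∀ d : G, (∃ m n : ℤ, z ^ m ≤ d ∧ d ≤ z ^ n) →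
      ((d : G ⧸ M) = (1 : G ⧸ M) ↔ ∃ n : ℤ, d = z ^ n)) := by
  have := Subgroup.normal_of_le_center hcent
  have := mulLeftMono_of_mulLeftStrictMono G
  have := mulRightMono_of_mulRightStrictMono G
  refine ⟨isCyclicOrder_windingRel hcent hzM hzmin hdisc, fun a => ?_, fun d hd => ?_⟩
  · obtain ⟨g, hg, rfl⟩ := surjOn_mk_Ico hcent hdisc (mem_univ a)
    exact ⟨g, ⟨0, 1, by simpa using hg.1, by simpa using hg.2.le⟩, rfl⟩
  · rw [QuotientGroup.eq_one_iff]
    exact mem_iff_exists_zpow_of_mem_zpowersHull hzM hz1 hzmin hd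
end

section
/- Let H be a c-convex subgroup of a cyclically ordered group (G,R), and let x,x',y,y',z,z' \in G with R(x,y,z), the cosets xH, yH, zH pairwise distinct, and xH = x'H, yH = y'H, zH = z'H. Then R(x',y',z'). -/
/-- A subgroup of a cyclically ordered group is c-convex if it is the whole
group, or it is proper, contains no non-identity element of order `2`, and is a
c-convex set: `R h⁻¹ 1 h` and `R 1 g h` with `h ∈ H` imply `g ∈ H`. -/
def IsCConvex {G : Type*} [Group G] (R : G → G → G → Prop) (H : Subgroup G) : Prop :=
  H = ⊤ ∨ (H ≠ ⊤ ∧ (∀ h ∈ H, h ^ 2 = 1 → h = 1) ∧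
    ∀ h ∈ H, ∀ g : G, R h⁻¹ 1 h → R 1 g h → g ∈ H)

section Aux

variable {G : Type*} [Group G] {R : G → G → G → Prop}

lemma co_asym (hR : IsCyclicOrder R) {p q r : G} (h1 : R p q r) (h2 : R p r q) : False := by
  have h3 := hR.2.2.1 _ _ _ h2
  have h4 := hR.2.2.1 _ _ _ h3
  have h5 := hR.2.2.2.1 _ _ _ _ h1 h4
  exact (hR.1 _ _ _ h5).1 rfl

lemma co_transl (hR : IsCyclicOrder R) (u : G) {a b c : G} :
    R (u * a) (u * b) (u * c) ↔ R a b c := by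
  constructor
  · intro h
    have := hR.2.2.2.2 _ _ _ u⁻¹ 1 h
    simpa [mul_assoc] using this
  · intro h
    simpa [mul_assoc] using hR.2.2.2.2 _ _ _ u 1 h

lemma co_fwd (hR : IsCyclicOrder R) {H : Subgroup G}
    (hconv : ∀ h ∈ H, ∀ g : G, R h⁻¹ 1 h → R 1 g h → g ∈ H)
    {k a c : G} (hk : k ∈ H) (hpos : R k⁻¹ 1 k) (hc : c ∉ H) (h : R a 1 c) : R a k c := by
  by_cases hk1 : k = 1
  · subst hk1; exact h
  have hkc : k ≠ c := fun e => hc (e ▸ hk)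
  have hc1 : c ≠ 1 := fun e => hc (e ▸ H.one_mem)
  rcases hR.2.1 1 k c (Ne.symm hk1) hkc hc1 with h1 | h1
  · exact hR.2.2.2.1 _ _ _ _ h h1
  · exact absurd (hconv k hk c hpos h1) hc

lemma co_rev (hR : IsCyclicOrder R) {H : Subgroup G}
    (hconv : ∀ h ∈ H, ∀ g : G, R h⁻¹ 1 h → R 1 g h → g ∈ H)
    {k a c : G} (hk : k ∈ H) (hpos : R k⁻¹ 1 k) (ha : a ∉ H) (hc : c ∉ H)
    (h : R a k c) : R a 1 c := by
  by_cases hk1 : k = 1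
  · subst hk1; exact h
  have ha1 : a ≠ 1 := fun e => ha (e ▸ H.one_mem)
  have hc1 : c ≠ 1 := fun e => hc (e ▸ H.one_mem)
  have hca : c ≠ a := (hR.1 _ _ _ h).2.2
  rcases hR.2.1 a 1 c ha1 (Ne.symm hc1) hca with h1 | h1
  · exact h1
  -- bad case: R a c 1
  exfalso
  have hka : k ≠ a := fun e => ha (e ▸ hk)
  have h1ka : R 1 k a := by
    rcases hR.2.1 1 k a (Ne.symm hk1) hka ha1 with h2 | h2
    · exact h2
    · exact absurd (hconv k hk a hpos h2) ha
  have hc1a : R c 1 a := hR.2.2.1 _ _ _ h1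
  have hcka : R c k a := hR.2.2.2.1 _ _ _ _ hc1a h1ka
  have hcak : R c a k := hR.2.2.1 _ _ _ (hR.2.2.1 _ _ _ h)
  exact co_asym hR hcka hcak

lemma co_mid (hR : IsCyclicOrder R) {H : Subgroup G}
    (htor : ∀ h ∈ H, h ^ 2 = 1 → h = 1)
    (hconv : ∀ h ∈ H, ∀ g : G, R h⁻¹ 1 h → R 1 g h → g ∈ H)
    {h a c : G} (hh : h ∈ H) (ha : a ∉ H) (hc : c ∉ H)
    (hr : R a 1 c) : R a h c := by
  by_cases hh1 : h = 1
  · subst hh1; exact hr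
  have hinvne : h⁻¹ ≠ h := by
    intro e
    refine hh1 (htor h hh ?_)
    rw [pow_two, show h * h = h⁻¹ * h from by rw [e], inv_mul_cancel]
  have hinv1 : h⁻¹ ≠ 1 := fun e => hh1 (by simpa using congrArg Inv.inv e)
  rcases hR.2.1 h⁻¹ 1 h hinv1 (Ne.symm hh1) (Ne.symm hinvne) with hpos | hneg
  · exact co_fwd hR hconv hh hpos hc hr
  -- negative case: R h⁻¹ h 1, so h⁻¹ is positive
  · have hpos' : R (h⁻¹)⁻¹ 1 h⁻¹ := by
      rw [inv_inv]
      exact hR.2.2.1 _ _ _ hneg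
    have hk : h⁻¹ ∈ H := H.inv_mem hh
    have ha' : h⁻¹ * a ∉ H := fun m => ha (by simpa using H.mul_mem hh m)
    have hc' : h⁻¹ * c ∉ H := fun m => hc (by simpa using H.mul_mem hh m)
    have h2 : R (h⁻¹ * a) h⁻¹ (h⁻¹ * c) := by
      have := (co_transl hR h⁻¹).mpr hr
      simpa using this
    have h3 : R (h⁻¹ * a) 1 (h⁻¹ * c) := co_rev hR hconv hk hpos' ha' hc' h2
    have := (co_transl hR h).mpr h3
    simpa using this

end Aux

/-- If `H` is c-convex, `R x y z` holds, the cosets `xH, yH, zH` are pairwise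
distinct and `xH = x'H`, `yH = y'H`, `zH = z'H`, then `R x' y' z'`. -/
theorem cconvex_coset_invariance {G : Type*} [Group G] (R : G → G → G → Prop)
    (hR : IsCyclicOrder R) (H : Subgroup G) (hH : IsCConvex R H)
    (x x' y y' z z' : G) (hxyz : R x y z)
    (hxy : x⁻¹ * y ∉ H) (hyz : y⁻¹ * z ∉ H) (hzx : z⁻¹ * x ∉ H)
    (hx : x⁻¹ * x' ∈ H) (hy : y⁻¹ * y' ∈ H) (hz : z⁻¹ * z' ∈ H) :
    R x' y' z' := by
  rcases hH with htop | ⟨-, htor, hconv⟩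
  · exact absurd (htop ▸ Subgroup.mem_top _) hxy
  have inv_not : ∀ g : G, g ∉ H → g⁻¹ ∉ H := fun g hg m => hg (by simpa using H.inv_mem m)
  have mul_not_left : ∀ g h : G, h ∈ H → g ∉ H → g * h ∉ H :=
    fun g h hh hg m => hg (by simpa using H.mul_mem m (H.inv_mem hh))
  have mul_not_right : ∀ g h : G, h ∈ H → g ∉ H → h * g ∉ H :=
    fun g h hh hg m => hg (by simpa using H.mul_mem (H.inv_mem hh) m)
  have hyx : y⁻¹ * x ∉ H := by
    have := inv_not _ hxy; simpa using this
  have hzy : z⁻¹ * y ∉ H := by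
    have := inv_not _ hyz; simpa using this
  have hxz : x⁻¹ * z ∉ H := by
    have := inv_not _ hzx; simpa using this
  -- Step 1: replace y by y'
  have step1 : R x y' z := by
    have h0 : R (y⁻¹ * x) 1 (y⁻¹ * z) := by
      have := (co_transl hR y⁻¹).mpr hxyz
      simpa using this
    have h1 := co_mid hR htor hconv hy hyx hyz h0
    have := (co_transl hR y).mpr h1
    simpa [mul_assoc] using this
  -- Step 2: replace x by x'
  have step2 : R x' y' z := by
    have hzx' : R z x y' := hR.2.2.1 _ _ _ (hR.2.2.1 _ _ _ step1)
    have h0 : R (x⁻¹ * z) 1 (x⁻¹ * y') := by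
      have := (co_transl hR x⁻¹).mpr hzx'
      simpa using this
    have hxy' : x⁻¹ * y' ∉ H := by
      have : (x⁻¹ * y) * (y⁻¹ * y') ∉ H := mul_not_left _ _ hy hxy
      simpa [mul_assoc] using this
    have h1 := co_mid hR htor hconv hx hxz hxy' h0
    have := (co_transl hR x).mpr h1
    simpa [mul_assoc] using hR.2.2.1 _ _ _ this
  -- Step 3: replace z by z'
  have hzy' : z⁻¹ * y' ∉ H := by
    have : (z⁻¹ * y) * (y⁻¹ * y') ∉ H := mul_not_left _ _ hy hzy
    simpa [mul_assoc] using this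
  have hzx'' : z⁻¹ * x' ∉ H := by
    have : (z⁻¹ * x) * (x⁻¹ * x') ∉ H := mul_not_left _ _ hx hzx
    simpa [mul_assoc] using this
  have h0 : R (z⁻¹ * y') 1 (z⁻¹ * x') := by
    have := (co_transl hR z⁻¹).mpr (hR.2.2.1 _ _ _ step2)
    simpa using this
  have h1 := co_mid hR htor hconv hz hzy' hzx'' h0
  have h2 := (co_transl hR z).mpr h1
  have h3 : R y' z' x' := by simpa [mul_assoc] using h2
  exact hR.2.2.1 _ _ _ (hR.2.2.1 _ _ _ h3)
end

section
/- A c-convex subgroup of a c-convex subgroup of a cyclically ordered group (G,R) is itself a c-convex subgroup of (G,R). -/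
/-- A c-convex subgroup of a c-convex subgroup of `(G,R)` is a c-convex
subgroup of `(G,R)`. -/
theorem cconvex_trans {G : Type*} [Group G] (R : G → G → G → Prop)
    (hR : IsCyclicOrder R) (H : Subgroup G) (hH : IsCConvex R H)
    (K : Subgroup H)
    (hK : IsCConvex (fun a b c : H => R (a : G) (b : G) (c : G)) K) :
    IsCConvex R (K.map H.subtype) := by
  rcases hK with rfl | ⟨hKtop, hK2, hKc⟩
  · rw [← MonoidHom.range_eq_map, Subgroup.subtype_range]
    exact hH
  · right
    refine ⟨?_, ?_, ?_⟩
    · intro htop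
      apply hKtop
      ext x
      simp only [Subgroup.mem_top, iff_true]
      have hx : (x : G) ∈ K.map H.subtype := by rw [htop]; trivial
      rcases hx with ⟨y, hy, hxy⟩
      have : y = x := Subtype.ext hxy
      rwa [this] at hy
    · rintro h ⟨k, hk, rfl⟩ hsq
      have hk2 : k ^ 2 = 1 := by
        apply Subtype.ext
        push_cast
        exact hsq
      have := hK2 k hk hk2
      rw [this]; rfl
    · rintro h ⟨k, hk, rfl⟩ g hR1 hR2
      have hgH : g ∈ H := by
        rcases hH with rfl | ⟨_, _, hHc⟩
        · trivial
        · exact hHc _ k.2 g hR1 hR2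
      refine ⟨⟨g, hgH⟩, hKc k hk ⟨g, hgH⟩ ?_ ?_, rfl⟩
      · exact hR1
      · exact hR2
end

section
/- If a cyclically ordered group (G,R) contains a copy of the group U of all roots of unity (with its inherited cyclic order from K = {z \in C : |z| = 1}), then every c-convex subgroup C of G is pure in G: for every x \in C, n \in N, and y \in G with y^n = x, there exists y' \in C with y'^n = x. -/
/-- The argument of a unimodular complex number, normalized to `[0, 2π)`. -/
noncomputable def circleTheta (u : Circle) : ℝ :=
  if Complex.arg (u : ℂ) < 0 then Complex.arg (u : ℂ) + 2 * Real.pi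
  else Complex.arg (u : ℂ)

/-- The standard cyclic order on the unit circle `K ⊆ ℂ`, via arguments in
`[0, 2π)`. -/
def circleR (a b c : Circle) : Prop :=
  (circleTheta a < circleTheta b ∧ circleTheta b < circleTheta c) ∨
  (circleTheta b < circleTheta c ∧ circleTheta c < circleTheta a) ∨
  (circleTheta c < circleTheta a ∧ circleTheta a < circleTheta b)

/-!
Cutting the cyclic order open at `1` gives a linear order `<` with least element `1` in which
`R x y z` says that `x, y, z` are in increasing cyclic order; both translations preserve `R`,
and inversion reverses `<` away from `1`. Conjugation by `g` is then an automorphism of `<`; if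
`g` has finite order, so has this automorphism, hence it is trivial: roots of unity are central.

Let `ξ = exp (2πi / 2n)`, `r = f ξ` and `m = r ^ n = f (-1)`. As a nontrivial involution,
`m ∉ C`, and c-convexity forces `x < m` or `x⁻¹ < m`; say `x < m`. Write `y = r ^ k * g` with
`g < r`. As `r ^ k` is central, `x = m ^ k * g ^ n`, and no wrap-around occurs in
`g ≤ g ^ n < m`. For odd `k` this would give `m ≤ x`, so `x = g ^ n`, and `g ≤ x < m < x⁻¹`
puts `g` in `C` by c-convexity.
-/

open Real

theorem circleTheta_nonneg (u : Circle) : 0 ≤ circleTheta u := by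
  unfold circleTheta
  split_ifs with h
  · linarith [Complex.neg_pi_lt_arg (u : ℂ)]
  · exact not_lt.1 h

theorem circleTheta_eq_zero_iff {u : Circle} : circleTheta u = 0 ↔ u = 1 := by
  unfold circleTheta
  split_ifs with h
  · refine ⟨fun h' => by linarith [Complex.neg_pi_lt_arg (u : ℂ), pi_pos], ?_⟩
    rintro rfl
    simp at h
  · exact Circle.arg_eq_zero

theorem circleTheta_exp {t : ℝ} (h0 : 0 ≤ t) (h1 : t < 2 * π) :
    circleTheta (Circle.exp t) = t := by
  rcases le_or_gt t π with h | h
  · rw [circleTheta, Circle.arg_exp (by linarith [pi_pos]) h, if_neg (by linarith)]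
  · rw [← Circle.exp_sub_two_pi, circleTheta,
      Circle.arg_exp (by linarith) (by linarith [pi_pos]), if_pos (by linarith)]
    ring

def cutLT {G : Type*} [Group G] (R : G → G → G → Prop) (a b : G) : Prop :=
  (a = 1 ∧ b ≠ 1) ∨ R 1 a b

structure IsCutAtOne {G : Type*} [Group G] [LinearOrder G] (R : G → G → G → Prop) : Prop where
  one_le : ∀ x : G, 1 ≤ x
  rel_iff : ∀ x y z : G, R x y z ↔ (x < y ∧ y < z) ∨ (y < z ∧ z < x) ∨ (z < x ∧ x < y)

namespace IsCyclicOrder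

variable {G : Type*} [Group G] {R : G → G → G → Prop}

theorem mul_left (hR : IsCyclicOrder R) (u : G) {x y z : G} (h : R x y z) :
    R (u * x) (u * y) (u * z) := by
  simpa using hR.2.2.2.2 x y z u 1 h

theorem mul_right (hR : IsCyclicOrder R) (v : G) {x y z : G} (h : R x y z) :
    R (x * v) (y * v) (z * v) := by
  simpa using hR.2.2.2.2 x y z 1 v h

theorem rel_of_cutLT (hR : IsCyclicOrder R) {x y z : G} (hxy : cutLT R x y)
    (hyz : cutLT R y z) : R x y z := by
  obtain ⟨hne, -, hcyc, htrans, -⟩ := hR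
  rcases hxy with ⟨rfl, hy⟩ | hxy <;> rcases hyz with ⟨rfl, -⟩ | hyz
  · exact absurd rfl hy
  · exact hyz
  · exact absurd rfl (hne _ _ _ hxy).2.2
  · exact hcyc _ _ _ (htrans _ _ _ _ (hcyc _ _ _ (hcyc _ _ _ hyz)) hxy)

theorem isStrictTotalOrder_cutLT (hR : IsCyclicOrder R) : IsStrictTotalOrder G (cutLT R) := by
  obtain ⟨hne, htot, hcyc, htrans, -⟩ := hR
  exact
    { irrefl := by
        rintro a (⟨h1, h⟩ | h)
        · exact h h1
        · exact (hne _ _ _ h).2.1 rfl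
      trans := by
        rintro a b c (⟨rfl, hb⟩ | hab) (⟨rfl, -⟩ | hbc)
        · exact absurd rfl hb
        · exact Or.inl ⟨rfl, (hne _ _ _ hbc).2.2⟩
        · exact absurd rfl (hne _ _ _ hab).2.2
        · exact Or.inr (hcyc _ _ _ (hcyc _ _ _ (htrans _ _ _ _ (hcyc _ _ _ hab) (hcyc _ _ _ hbc))))
      trichotomous := by
        intro a b hab hba
        by_contra h
        rcases eq_or_ne a 1 with rfl | ha
        · exact hab (Or.inl ⟨rfl, Ne.symm h⟩)
        rcases eq_or_ne b 1 with rfl | hb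
        · exact hba (Or.inl ⟨rfl, ha⟩)
        rcases htot 1 a b (Ne.symm ha) h hb with h' | h'
        · exact hab (Or.inr h')
        · exact hba (Or.inr h') }

theorem exists_isCutAtOne (hR : IsCyclicOrder R) : ∃ _ : LinearOrder G, IsCutAtOne R := by
  have := hR.isStrictTotalOrder_cutLT
  classical
  let _ : LinearOrder G := linearOrderOfSTO (cutLT R)
  have rel_of_lt_of_lt : ∀ x y z : G, x < y → y < z → R x y z := fun _ _ _ => hR.rel_of_cutLT
  obtain ⟨hne, -, hcyc, htrans, -⟩ := hR
  refine ⟨‹_›, fun x => ?_, fun x y z => ⟨fun h => ?_, ?_⟩⟩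
  · rcases eq_or_ne x 1 with rfl | hx
    · exact le_rfl
    · exact le_of_lt (Or.inl ⟨rfl, hx⟩)
  · obtain ⟨hxy, hyz, hzx⟩ := hne _ _ _ h
    have hasymm : ¬ R x z y := fun h' =>
      (hne _ _ _ (htrans _ _ _ _ h (hcyc _ _ _ (hcyc _ _ _ h')))).1 rfl
    have : ((x < y ∧ y < z) ∨ (y < z ∧ z < x) ∨ (z < x ∧ x < y)) ∨
        ((x < z ∧ z < y) ∨ (z < y ∧ y < x) ∨ (y < x ∧ x < z)) := by
      grind
    rcases this with h' | ⟨h1, h2⟩ | ⟨h1, h2⟩ | ⟨h1, h2⟩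
    · exact h'
    · exact absurd (rel_of_lt_of_lt _ _ _ h1 h2) hasymm
    · exact absurd (hcyc _ _ _ (hcyc _ _ _ (rel_of_lt_of_lt _ _ _ h1 h2))) hasymm
    · exact absurd (hcyc _ _ _ (rel_of_lt_of_lt _ _ _ h1 h2)) hasymm
  · rintro (⟨h1, h2⟩ | ⟨h1, h2⟩ | ⟨h1, h2⟩)
    · exact rel_of_lt_of_lt _ _ _ h1 h2
    · exact hcyc _ _ _ (hcyc _ _ _ (rel_of_lt_of_lt _ _ _ h1 h2))
    · exact hcyc _ _ _ (rel_of_lt_of_lt _ _ _ h1 h2)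

end IsCyclicOrder

namespace IsCutAtOne

variable {G : Type*} [Group G] [LinearOrder G] {R : G → G → G → Prop}

theorem one_lt_of_ne (hcut : IsCutAtOne R) {x : G} (hx : x ≠ 1) : 1 < x :=
  (hcut.one_le x).lt_of_ne' hx

theorem rel_one_left_iff (hcut : IsCutAtOne R) {a b : G} : R 1 a b ↔ 1 < a ∧ a < b := by
  have := hcut.one_le a
  have := hcut.one_le b
  rw [hcut.rel_iff]
  grind

theorem rel_one_mid_iff (hcut : IsCutAtOne R) {a b : G} : R a 1 b ↔ 1 < b ∧ b < a := by
  have := hcut.one_le a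
  have := hcut.one_le b
  rw [hcut.rel_iff]
  grind

theorem rel_one_right_iff (hcut : IsCutAtOne R) {a b : G} : R a b 1 ↔ 1 < a ∧ a < b := by
  have := hcut.one_le a
  have := hcut.one_le b
  rw [hcut.rel_iff]
  grind

theorem lt_of_rel (hcut : IsCutAtOne R) {x y z : G} (h : R x y z) (hxz : x < z) :
    x < y ∧ y < z := by
  rw [hcut.rel_iff] at h
  grind

theorem conj_lt_conj (hcut : IsCutAtOne R) (hR : IsCyclicOrder R) (g : G) {x y : G}
    (hxy : x < y) : g * x * g⁻¹ < g * y * g⁻¹ := by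
  rcases eq_or_ne x 1 with rfl | hx
  · rw [mul_one, mul_inv_cancel]
    refine hcut.one_lt_of_ne fun h => ?_
    rw [mul_inv_eq_one, mul_eq_left] at h
    exact hxy.ne' h
  · have h := hR.2.2.2.2 _ _ _ g g⁻¹ (hcut.rel_one_left_iff.2 ⟨hcut.one_lt_of_ne hx, hxy⟩)
    rw [mul_one, mul_inv_cancel] at h
    exact (hcut.rel_one_left_iff.1 h).2

theorem inv_lt_inv (hcut : IsCutAtOne R) (hR : IsCyclicOrder R) {x y : G} (hx : x ≠ 1)
    (hxy : x < y) : y⁻¹ < x⁻¹ := by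
  have key : ∀ x y : G, 1 < x → x < y → 1 < x⁻¹ → x⁻¹ < y⁻¹ → y⁻¹ < y := by
    intro x y hx hxy hx' hxy'
    have h1 := hR.mul_left x (hcut.rel_one_left_iff.2 ⟨hx', hxy'⟩)
    rw [mul_one, mul_inv_cancel] at h1
    have h2 := hR.mul_right y⁻¹ (hcut.rel_one_left_iff.2 ⟨hx, hxy⟩)
    rw [one_mul, mul_inv_cancel] at h2
    have := hcut.rel_one_mid_iff.1 h1
    have := hcut.rel_one_right_iff.1 h2
    order
  by_contra h
  have h' : x⁻¹ < y⁻¹ := (not_lt.1 h).lt_of_ne (inv_injective.ne hxy.ne)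
  have hx₁ : 1 < x := hcut.one_lt_of_ne hx
  have hx₂ : 1 < x⁻¹ := hcut.one_lt_of_ne (inv_ne_one.2 hx)
  have := key x y hx₁ hxy hx₂ h'
  have := key x⁻¹ y⁻¹ hx₂ h' (by rwa [inv_inv]) (by simpa using hxy)
  simp only [inv_inv] at this
  order

theorem le_mul_of_lt_of_le (hcut : IsCutAtOne R) (hR : IsCyclicOrder R) {a b c d : G}
    (hac : a < c) (hbd : b ≤ d) (hcd : c ≤ d⁻¹) : a ≤ a * b := by
  by_contra h
  rw [not_le] at h
  have ha : a ≠ 1 := by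
    rintro rfl
    exact (hcut.one_le b).not_gt (by simpa using h)
  have hab : a⁻¹ ≤ b := by
    rcases eq_or_ne (a * b) 1 with h1 | h1
    · exact (eq_inv_of_mul_eq_one_right h1).ge
    · have h2 := hR.mul_left a⁻¹ (hcut.rel_one_left_iff.2 ⟨hcut.one_lt_of_ne h1, h⟩)
      rw [mul_one, inv_mul_cancel_left, inv_mul_cancel] at h2
      exact (hcut.rel_one_right_iff.1 h2).2.le
  have hda : d⁻¹ ≤ a := by
    rcases (hab.trans hbd).lt_or_eq with h1 | h1
    · simpa using (hcut.inv_lt_inv hR (inv_ne_one.2 ha) h1).le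
    · rw [← h1, inv_inv]
  order

theorem mul_lt_mul_of_lt (hcut : IsCutAtOne R) (hR : IsCyclicOrder R) {a b c d : G}
    (hac : a < c) (hbd : b < d) (hc : c < c * d) (hd : d < c * d) (hcd : c ≤ d⁻¹) :
    a ≤ a * b ∧ a * b < c * d := by
  refine ⟨hcut.le_mul_of_lt_of_le hR hac hbd.le hcd, ?_⟩
  rcases eq_or_ne b 1 with rfl | hb
  · simpa using hac.trans hc
  have had : a < a * d := (hcut.le_mul_of_lt_of_le hR hac le_rfl hcd).lt_of_ne
    (by simpa using ((hcut.one_le b).trans_lt hbd).ne')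
  have hadcd : a * d < c * d := by
    rcases eq_or_ne a 1 with rfl | ha
    · simpa using hd
    have h := hR.mul_right d (hcut.rel_one_left_iff.2 ⟨hcut.one_lt_of_ne ha, hac⟩)
    rw [one_mul] at h
    exact (hcut.lt_of_rel h hd).2
  have h := hR.mul_left a (hcut.rel_one_left_iff.2 ⟨hcut.one_lt_of_ne hb, hbd⟩)
  rw [mul_one] at h
  exact (hcut.lt_of_rel h had).2.trans hadcd

theorem le_mul_of_mul_self_eq_one (hcut : IsCutAtOne R) (hR : IsCyclicOrder R) {m x : G}
    (hm : m * m = 1) (hx : x < m) : m ≤ m * x := by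
  rcases eq_or_ne x 1 with rfl | hx1
  · rw [mul_one]
  have h := hR.mul_left m (hcut.rel_one_left_iff.2 ⟨hcut.one_lt_of_ne hx1, hx⟩)
  rw [mul_one, hm] at h
  exact (hcut.rel_one_right_iff.1 h).2.le

end IsCutAtOne

theorem IsCyclicOrder.commute_of_pow_eq_one {G : Type*} [Group G] {R : G → G → G → Prop}
    (hR : IsCyclicOrder R) {g : G} {n : ℕ} (hg : g ^ n = 1) (hn : n ≠ 0) (x : G) :
    Commute g x := by
  obtain ⟨_, hcut⟩ := hR.exists_isCutAtOne
  have not_lt_conj : ∀ g x : G, g ^ n = 1 → ¬ x < g * x * g⁻¹ := by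
    intro g x hg hlt
    have hmono : StrictMono fun k : ℕ => g ^ k * x * (g ^ k)⁻¹ := by
      refine strictMono_nat_of_lt_succ fun k => ?_
      have h := hcut.conj_lt_conj hR (g ^ k) hlt
      rwa [show g ^ k * (g * x * g⁻¹) * (g ^ k)⁻¹ = g ^ (k + 1) * x * (g ^ (k + 1))⁻¹ by
        group] at h
    simpa [hg] using hmono (Nat.pos_of_ne_zero hn)
  rcases lt_trichotomy x (g * x * g⁻¹) with h | h | h
  · exact absurd h (not_lt_conj g x hg)
  · rw [eq_mul_inv_iff_mul_eq] at h
    exact h.symm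
  · refine absurd ?_ (not_lt_conj g⁻¹ (g * x * g⁻¹) (by rw [inv_pow, hg, inv_one]))
    simpa [mul_assoc] using h

namespace IsCutAtOne

variable {G : Type*} [Group G] [LinearOrder G] {R : G → G → G → Prop}

section OrderedRoot

variable {r : G} {K : ℕ}

theorem exists_inv_pow_mul_lt (hcut : IsCutAtOne R) (hR : IsCyclicOrder R) (hK : 1 < K)
    (hrK : r ^ K = 1) (hr : StrictMonoOn (fun k : ℕ => r ^ k) (Set.Iio K)) (g : G) :
    ∃ k : ℕ, (r ^ k)⁻¹ * g < r := by
  classical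
  set k := Nat.findGreatest (fun k => r ^ k ≤ g) (K - 1)
  have hkg : r ^ k ≤ g := Nat.findGreatest_spec (P := fun k => r ^ k ≤ g) (Nat.zero_le _)
    (by simpa using hcut.one_le g)
  have hkK : k < K := (Nat.findGreatest_le _).trans_lt (by omega)
  have hr_pos : ∀ j, 0 < j → j < K → 1 < r ^ j := fun j hj hjK => by
    simpa using hr (show 0 < K by omega) hjK hj
  refine ⟨k, ?_⟩
  rcases hkg.lt_or_eq with hlt | heq
  swap
  · rw [heq, inv_mul_cancel]
    simpa using hr_pos 1 one_pos hK
  have hgk : R (r ^ k) g (r ^ (k + 1)) := by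
    rcases (Nat.succ_le_of_lt hkK).lt_or_eq with h | h
    · have : g < r ^ (k + 1) := not_le.1 (Nat.findGreatest_is_greatest (Nat.lt_succ_self k)
        (by omega))
      exact (hcut.rel_iff _ _ _).2 (Or.inl ⟨hlt, this⟩)
    · rw [show k + 1 = K from h, hrK]
      exact hcut.rel_one_right_iff.2 ⟨hr_pos k (by omega) hkK, hlt⟩
  have h := hR.mul_left (r ^ k)⁻¹ hgk
  rw [inv_mul_cancel, pow_succ, inv_mul_cancel_left] at h
  exact (hcut.rel_one_left_iff.1 h).2

theorem le_pow_and_pow_lt (hcut : IsCutAtOne R) (hR : IsCyclicOrder R) (hrK : r ^ K = 1)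
    (hr : StrictMonoOn (fun k : ℕ => r ^ k) (Set.Iio K)) {g : G} (hg : g < r) {n : ℕ}
    (hn : 0 < n) (hnK : n < K) : g ≤ g ^ n ∧ g ^ n < r ^ n := by
  induction n with
  | zero => omega
  | succ m ih =>
    rcases Nat.eq_zero_or_pos m with rfl | hm
    · simpa using hg
    obtain ⟨hg_le, hg_lt⟩ := ih hm (by omega)
    have hr_lt : ∀ i j, i < j → j < K → r ^ i < r ^ j := fun i j hij hjK =>
      hr (show i < K by omega) hjK hij
    have hr_inv : r⁻¹ = r ^ (K - 1) :=
      (eq_inv_of_mul_eq_one_left ((pow_sub_one_mul (by omega) r).trans hrK)).symm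
    have h_no_wrap : r ^ m ≤ r⁻¹ := by
      rw [hr_inv]
      exact (hr.le_iff_le (show m < K by omega) (show K - 1 < K by omega)).2 (by omega)
    obtain ⟨h1, h2⟩ := hcut.mul_lt_mul_of_lt hR hg_lt hg
      (by rw [← pow_succ]; exact hr_lt m (m + 1) (by omega) (by omega))
      (by rw [← pow_succ]; simpa using hr_lt 1 (m + 1) (by omega) (by omega)) h_no_wrap
    rw [pow_succ, pow_succ]
    exact ⟨hg_le.trans h1, h2⟩

end OrderedRoot

section Convex

variable {C : Subgroup G} (hconv : ∀ h ∈ C, ∀ g : G, R h⁻¹ 1 h → R 1 g h → g ∈ C)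
include hconv

theorem mem_of_le_of_lt_inv (hcut : IsCutAtOne R) {h g : G} (hh : h ∈ C) (hlt : h < h⁻¹)
    (hgh : g ≤ h) : g ∈ C := by
  rcases hgh.lt_or_eq with hgh | rfl
  · rcases eq_or_ne g 1 with rfl | hg
    · exact C.one_mem
    exact hconv h hh g (hcut.rel_one_mid_iff.2 ⟨(hcut.one_le g).trans_lt hgh, hlt⟩)
      (hcut.rel_one_left_iff.2 ⟨hcut.one_lt_of_ne hg, hgh⟩)
  · exact hh

theorem lt_or_inv_lt_of_mem (hcut : IsCutAtOne R) (h2 : ∀ h ∈ C, h ^ 2 = 1 → h = 1) {m x : G}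
    (hm : m ∉ C) (hx : x ∈ C) : x < m ∨ x⁻¹ < m := by
  have lt_of_lt_inv : ∀ x ∈ C, x < x⁻¹ → x < m := fun x hx hlt =>
    not_le.1 fun hmx => hm (mem_of_le_of_lt_inv hconv hcut hx hlt hmx)
  rcases eq_or_ne x 1 with rfl | hx1
  · exact Or.inl (hcut.one_lt_of_ne fun h => hm (h ▸ C.one_mem))
  rcases lt_trichotomy x x⁻¹ with h | h | h
  · exact Or.inl (lt_of_lt_inv x hx h)
  · exact absurd (h2 x hx (by rw [sq]; nth_rw 2 [h]; exact mul_inv_cancel x)) hx1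
  · exact Or.inr (lt_of_lt_inv x⁻¹ (inv_mem hx) (by rwa [inv_inv]))

theorem exists_mem_pow_eq_of_lt (hcut : IsCutAtOne R) (hR : IsCyclicOrder R) {r : G} {n : ℕ}
    (hn : 0 < n) (hr2n : r ^ (2 * n) = 1)
    (hr : StrictMonoOn (fun k : ℕ => r ^ k) (Set.Iio (2 * n)))
    {x y : G} (hx : x ∈ C) (hxr : x < r ^ n) (hy : y ^ n = x) : ∃ y' ∈ C, y' ^ n = x := by
  obtain ⟨k, hk⟩ := hcut.exists_inv_pow_mul_lt hR (by omega) hr2n hr y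
  set g := (r ^ k)⁻¹ * y
  obtain ⟨hg_le, hg_lt⟩ := hcut.le_pow_and_pow_lt hR hr2n hr hk hn (by omega)
  have hcomm : Commute (r ^ k) g := hR.commute_of_pow_eq_one
    (by rw [← pow_mul, mul_comm, pow_mul, hr2n, one_pow]) (show 2 * n ≠ 0 by omega) g
  have hmm : r ^ n * r ^ n = 1 := by rw [← pow_add, ← two_mul, hr2n]
  have hx_eq : x = (r ^ n) ^ k * g ^ n := by
    rw [← hy, show y = r ^ k * g by simp [g], hcomm.mul_pow, ← pow_mul, ← pow_mul, mul_comm]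
  have hxg : x = g ^ n := by
    have hpow : (r ^ n) ^ k = 1 ∨ (r ^ n) ^ k = r ^ n := by
      rcases Nat.even_or_odd' k with ⟨j, rfl | rfl⟩
      · exact Or.inl (by rw [pow_mul, sq, hmm, one_pow])
      · exact Or.inr (by rw [pow_succ, pow_mul, sq, hmm, one_pow, one_mul])
    rcases hpow with h | h
    · rwa [h, one_mul] at hx_eq
    · rw [h] at hx_eq
      exact absurd (hx_eq ▸ hcut.le_mul_of_mul_self_eq_one hR hmm hg_lt) (not_le.2 hxr)
  refine ⟨g, ?_, hxg.symm⟩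
  rcases eq_or_ne x 1 with rfl | hx1
  · rw [le_antisymm (hxg ▸ hg_le) (hcut.one_le g)]
    exact C.one_mem
  have hx_inv : x < x⁻¹ := by
    have := hcut.inv_lt_inv hR hx1 hxr
    rw [inv_eq_of_mul_eq_one_right hmm] at this
    exact hxr.trans this
  exact mem_of_le_of_lt_inv hconv hcut hx hx_inv (hxg ▸ hg_le)

end Convex

end IsCutAtOne

theorem IsCutAtOne.map_lt_map_iff {G : Type*} [Group G] [LinearOrder G]
    {R : G → G → G → Prop} {U : Subgroup Circle} {f : U →* G} (hcut : IsCutAtOne R)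
    (hf : Function.Injective f)
    (hord : ∀ a b c : U, circleR (a : Circle) (b : Circle) (c : Circle) ↔ R (f a) (f b) (f c))
    {u v : U} : f u < f v ↔ circleTheta u < circleTheta v := by
  have one_lt_iff : ∀ w : U, 1 < f w ↔ 0 < circleTheta w := fun w => by
    rw [(hcut.one_le _).lt_iff_ne', (circleTheta_nonneg w).lt_iff_ne', Ne, Ne,
      map_eq_one_iff f hf, circleTheta_eq_zero_iff, OneMemClass.coe_eq_one]
  rcases eq_or_ne u 1 with rfl | hu
  · rw [map_one, one_lt_iff, OneMemClass.coe_one, circleTheta_eq_zero_iff.2 rfl]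
  have hu' : 1 < f u := hcut.one_lt_of_ne fun h => hu (hf (h.trans (map_one f).symm))
  have hθu := (one_lt_iff u).1 hu'
  have hθv := circleTheta_nonneg v
  calc f u < f v ↔ R (f 1) (f u) (f v) := by
        rw [map_one, hcut.rel_one_left_iff, and_iff_right hu']
    _ ↔ circleR ((1 : U) : Circle) u v := (hord 1 u v).symm
    _ ↔ circleTheta u < circleTheta v := by
        rw [circleR, OneMemClass.coe_one, circleTheta_eq_zero_iff.2 rfl]
        grind

theorem IsCutAtOne.exists_pow_eq_one_strictMonoOn {G : Type*} [Group G] [LinearOrder G]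
    {R : G → G → G → Prop} {U : Subgroup Circle} {f : U →* G} (hcut : IsCutAtOne R)
    (hf : Function.Injective f)
    (hord : ∀ a b c : U, circleR (a : Circle) (b : Circle) (c : Circle) ↔ R (f a) (f b) (f c))
    (hU : ∀ u : Circle, u ∈ U ↔ ∃ n : ℕ, 0 < n ∧ u ^ n = 1) {K : ℕ} (hK : 0 < K) :
    ∃ ξ : U, ξ ^ K = 1 ∧ StrictMonoOn (fun k : ℕ => f ξ ^ k) (Set.Iio K) := by
  have hKR : (0 : ℝ) < K := by exact_mod_cast hK
  have hexp : Circle.exp (2 * π / K) ^ K = 1 := by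
    rw [← Circle.exp_natCast_mul, mul_div_cancel₀ _ hKR.ne', Circle.exp_two_pi]
  set ξ : U := ⟨_, (hU _).2 ⟨K, hK, hexp⟩⟩
  have hθ : ∀ k : ℕ, k < K → circleTheta ↑(ξ ^ k) = k * (2 * π / K) := fun k hk => by
    have hkR : (k : ℝ) < K := by exact_mod_cast hk
    rw [SubmonoidClass.coe_pow, ← Circle.exp_natCast_mul]
    refine circleTheta_exp (by positivity) ?_
    rw [mul_div_assoc', div_lt_iff₀ hKR]
    nlinarith [pi_pos]
  refine ⟨ξ, Subtype.ext (by simpa using hexp), fun i hi j hj hij => ?_⟩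
  simp only [← map_pow]
  rw [hcut.map_lt_map_iff hf hord, hθ i hi, hθ j hj]
  gcongr

/-- If a cyclically ordered group `(G,R)` contains a copy of the group `U` of
all roots of unity with its cyclic order inherited from `K`, then every
c-convex subgroup `C` of `G` is pure in `G`. -/
theorem cconvex_pure_of_contains_roots_of_unity {G : Type*} [Group G]
    (R : G → G → G → Prop) (hR : IsCyclicOrder R)
    (U : Subgroup Circle) (hU : ∀ u : Circle, u ∈ U ↔ ∃ n : ℕ, 0 < n ∧ u ^ n = 1)
    (f : U →* G) (hf : Function.Injective f)
    (hord : ∀ a b c : U, circleR (a : Circle) (b : Circle) (c : Circle) ↔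
      R (f a) (f b) (f c))
    (C : Subgroup G) (hC : IsCConvex R C) :
    ∀ x ∈ C, ∀ n : ℕ, ∀ y : G, y ^ n = x → ∃ y' ∈ C, y' ^ n = x := by
  intro x hx n y hy
  rcases hC with rfl | ⟨-, h2, hconv⟩
  · exact ⟨y, Subgroup.mem_top y, hy⟩
  rcases Nat.eq_zero_or_pos n with rfl | hn
  · exact ⟨1, C.one_mem, by rw [← hy, pow_zero, pow_zero]⟩
  obtain ⟨_, hcut⟩ := hR.exists_isCutAtOne
  obtain ⟨ξ, hξ, hmono⟩ :=
    hcut.exists_pow_eq_one_strictMonoOn hf hord hU (show 0 < 2 * n by omega)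
  have hr : f ξ ^ (2 * n) = 1 := by rw [← map_pow, hξ, map_one]
  have hm : f ξ ^ n ∉ C := fun hm => by
    have h1 : 1 < f ξ ^ n := by
      simpa using hmono (show 0 < 2 * n by omega) (show n < 2 * n by omega) hn
    exact h1.ne' (h2 _ hm (by rw [← pow_mul, mul_comm, hr]))
  rcases hcut.lt_or_inv_lt_of_mem hconv h2 hm hx with hxm | hxm
  · exact hcut.exists_mem_pow_eq_of_lt hconv hR hn hr hmono hx hxm hy
  · obtain ⟨y', hy'C, hy'⟩ :=
      hcut.exists_mem_pow_eq_of_lt hconv hR hn hr hmono (inv_mem hx) hxm (by rw [inv_pow, hy])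
    exact ⟨y'⁻¹, inv_mem hy'C, by rw [inv_pow, hy', inv_inv]⟩
end
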